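/- Let n be a positive integer, ξ a complex non-real algebraic number of degree greater than n, μ₀ ∈ ℂ* with dim V_n(μ₀,ξ) = t_n(ξ), and suppose t_n(ξ) > (n+1)/2. Then the space W_{n+1} of rational polynomials of degree at most n+1 is the direct sum of V_n(μ₀,ξ) and X·V_n(μ₀,ξ). -/

import Mathlib

open Polynomial

/-- The ℚ-vector space of polynomials `f ∈ ℚ[X]` of degree at most `n`
with `μ * f(ξ) ∈ ℝ`. -/
noncomputable def Vspace (n : ℕ) (μ ξ : ℂ) : Submodule ℚ ℚ[X] where
  carrier := {f | f.natDegree ≤ n ∧ ∃ r : ℝ, μ * aeval ξ f = (r : ℂ)}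
  zero_mem' := ⟨by simp, 0, by simp⟩
  add_mem' := by
    rintro f g ⟨hf, r, hr⟩ ⟨hg, s, hs⟩
    refine ⟨(natDegree_add_le f g).trans (by simp [hf, hg]), r + s, ?_⟩
    push_cast
    rw [map_add, mul_add, hr, hs]
  smul_mem' := by
    rintro c f ⟨hf, r, hr⟩
    refine ⟨(natDegree_smul_le c f).trans hf, c * r, ?_⟩
    rw [map_smul, Algebra.mul_smul_comm, hr, Rat.smul_def]
    push_cast
    ring

/-- `t_n(ξ)`: the maximum over nonzero `μ ∈ ℂ` of `dim_ℚ V_n(μ,ξ)`. -/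
noncomputable def tdeg (n : ℕ) (ξ : ℂ) : ℕ :=
  sSup {d : ℕ | ∃ μ : ℂ, μ ≠ 0 ∧ d = Module.finrank ℚ (Vspace n μ ξ)}

/-!
If `f = X g` lies in `V = V_n(μ₀,ξ)` together with `g ≠ 0`, then `μ₀ g(ξ)` and `ξ μ₀ g(ξ)` are
both real, and `g(ξ) ≠ 0` because `deg g ≤ n` is below the degree of `ξ`; so `ξ` would be real.
Hence `V ∩ XV = 0`, and `V + XV` is a subspace of `W_{n+1}` of dimension `2 dim V ≥ n + 2`,
which is all of `W_{n+1}`.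
-/

open Module

namespace Polynomial

theorem finrank_degreeLT (R : Type*) [Ring R] [StrongRankCondition R] (k : ℕ) :
    finrank R (degreeLT R k) = k := by
  rw [(degreeLTEquiv R k).finrank_eq, finrank_fin_fun]

theorem mem_degreeLT_succ_of_natDegree_le {R : Type*} [Semiring R] {p : R[X]} {k : ℕ}
    (h : p.natDegree ≤ k) : p ∈ degreeLT R (k + 1) := by
  rw [degreeLT_succ_eq_degreeLE, mem_degreeLE]
  exact degree_le_of_natDegree_le h

theorem map_mulLeft_X_degreeLT_le (R : Type*) [CommSemiring R] (k : ℕ) :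
    (degreeLT R k).map (LinearMap.mulLeft R X) ≤ degreeLT R (k + 1) := by
  rintro _ ⟨p, hp, rfl⟩
  rw [SetLike.mem_coe, mem_degreeLT] at hp
  rw [LinearMap.mulLeft_apply, (commute_X p).eq, mem_degreeLT, Nat.cast_succ]
  calc (p * X).degree ≤ p.degree + X.degree := degree_mul_le _ _
    _ ≤ p.degree + 1 := by gcongr; exact degree_X_le
    _ < k + 1 := WithBot.add_lt_add_right WithBot.one_ne_bot hp

theorem sup_map_mulLeft_X_eq_degreeLT {K : Type*} [Field K] {k : ℕ} {W : Submodule K K[X]}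
    (hW : W ≤ degreeLT K (k + 1)) (hdisj : W ⊓ W.map (LinearMap.mulLeft K X) = ⊥)
    (hdim : k + 2 ≤ 2 * finrank K W) :
    W ⊔ W.map (LinearMap.mulLeft K X) = degreeLT K (k + 2) := by
  have hWX : W.map (LinearMap.mulLeft K X) ≤ degreeLT K (k + 2) :=
    (Submodule.map_mono hW).trans (map_mulLeft_X_degreeLT_le K (k + 1))
  have : FiniteDimensional K W := Submodule.finiteDimensional_of_le hW
  have hinj : Function.Injective (LinearMap.mulLeft K (X : K[X])) :=
    mul_right_injective₀ X_ne_zero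
  have hrank : finrank K (W.map (LinearMap.mulLeft K X)) = finrank K W :=
    (Submodule.equivMapOfInjective _ hinj W).finrank_eq.symm
  have hsum := Submodule.finrank_sup_add_finrank_inf_eq W (W.map (LinearMap.mulLeft K X))
  rw [hdisj, finrank_bot, add_zero, hrank] at hsum
  refine Submodule.eq_of_le_of_finrank_le (sup_le (hW.trans (degreeLT_mono (by omega))) hWX) ?_
  rw [finrank_degreeLT, hsum]
  omega

end Polynomial

theorem aeval_ne_zero_of_natDegree_lt_minpoly {K A : Type*} [Field K] [Ring A] [Algebra K A]
    {x : A} {p : K[X]} (hp : p ≠ 0) (hdeg : p.natDegree < (minpoly K x).natDegree) :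
    aeval x p ≠ 0 := fun h =>
  hdeg.not_ge (natDegree_le_natDegree (minpoly.degree_le_of_ne_zero K x hp h))

theorem Vspace_le_degreeLT (n : ℕ) (μ ξ : ℂ) : Vspace n μ ξ ≤ degreeLT ℚ (n + 1) :=
  fun _ hf => mem_degreeLT_succ_of_natDegree_le hf.1

theorem eq_zero_of_mem_Vspace_of_X_mul_mem {n : ℕ} {μ ξ : ℂ} (hξ : ξ.im ≠ 0) (hμ : μ ≠ 0)
    (hdeg : n < (minpoly ℚ ξ).natDegree) {g : ℚ[X]} (hg : g ∈ Vspace n μ ξ)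
    (hXg : X * g ∈ Vspace n μ ξ) : g = 0 := by
  by_contra hg0
  obtain ⟨hgdeg, s, hs⟩ := hg
  obtain ⟨-, r, hr⟩ := hXg
  have hs0 : s ≠ 0 := by
    rw [← Complex.ofReal_ne_zero, ← hs]
    exact mul_ne_zero hμ (aeval_ne_zero_of_natDegree_lt_minpoly hg0 (hgdeg.trans_lt hdeg))
  have hξs : ξ * s = r := by
    rw [← hr, ← hs, map_mul, aeval_X]
    ring
  have him := congrArg Complex.im hξs
  simp only [Complex.mul_im, Complex.ofReal_im, Complex.ofReal_re, mul_zero, zero_add] at him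
  exact hξ ((mul_eq_zero.mp him).resolve_right hs0)

theorem Vspace_inf_map_mulLeft_X_eq_bot {n : ℕ} {μ ξ : ℂ} (hξ : ξ.im ≠ 0) (hμ : μ ≠ 0)
    (hdeg : n < (minpoly ℚ ξ).natDegree) :
    Vspace n μ ξ ⊓ (Vspace n μ ξ).map (LinearMap.mulLeft ℚ X) = ⊥ := by
  rw [eq_bot_iff]
  rintro _ ⟨hXg, g, hg, rfl⟩
  rw [LinearMap.mulLeft_apply] at hXg ⊢
  rw [eq_zero_of_mem_Vspace_of_X_mul_mem hξ hμ hdeg hg hXg, mul_zero]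
  exact Submodule.zero_mem _

theorem Vspace_direct_sum_decomposition_general (n : ℕ) (ξ : ℂ)
    (hξreal : ξ.im ≠ 0)
    (hdeg : n < (minpoly ℚ ξ).natDegree)
    (μ₀ : ℂ) (hμ₀ : μ₀ ≠ 0)
    (hmax : Module.finrank ℚ (Vspace n μ₀ ξ) = tdeg n ξ)
    (ht : n + 1 < 2 * tdeg n ξ) :
    Vspace n μ₀ ξ ⊔ (Vspace n μ₀ ξ).map (LinearMap.mulLeft ℚ (X : ℚ[X]))
      = Polynomial.degreeLT ℚ (n + 2) ∧
    Vspace n μ₀ ξ ⊓ (Vspace n μ₀ ξ).map (LinearMap.mulLeft ℚ (X : ℚ[X])) = ⊥ := by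
  have hdisj := Vspace_inf_map_mulLeft_X_eq_bot hξreal hμ₀ hdeg
  exact ⟨sup_map_mulLeft_X_eq_degreeLT (Vspace_le_degreeLT n μ₀ ξ) hdisj (by omega), hdisj⟩

theorem Vspace_direct_sum_decomposition (n : ℕ) (hn : 0 < n) (ξ : ℂ)
    (hξreal : ξ.im ≠ 0) (hξalg : IsAlgebraic ℚ ξ)
    (hdeg : n < (minpoly ℚ ξ).natDegree)
    (μ₀ : ℂ) (hμ₀ : μ₀ ≠ 0)
    (hmax : Module.finrank ℚ (Vspace n μ₀ ξ) = tdeg n ξ)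
    (ht : n + 1 < 2 * tdeg n ξ) :
    Vspace n μ₀ ξ ⊔ (Vspace n μ₀ ξ).map (LinearMap.mulLeft ℚ (X : ℚ[X]))
      = Polynomial.degreeLT ℚ (n + 2) ∧
    Vspace n μ₀ ξ ⊓ (Vspace n μ₀ ξ).map (LinearMap.mulLeft ℚ (X : ℚ[X])) = ⊥ :=
  Vspace_direct_sum_decomposition_general n ξ hξreal hdeg μ₀ hμ₀ hmax ht
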